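/- If A and B are self-adjoint matrices on ℂⁿ with A ≥ B ≥ 0, and x ∈ ℂⁿ and λ ∈ ℝ satisfy (√A − √B)x = λx with x ≠ 0 and λ < 0, then ⟨√A x, x⟩ = 0, from which √A x = √B x = 0 and a contradiction follows; in particular every real eigenvalue λ of √A − √B satisfies λ ⟨√A x, x⟩ ≥ 0 for a corresponding eigenvector x. -/

import Mathlib

/-!
Put `D = √A - √B`, a Hermitian matrix. Since `A - B = √A D + D √B`, an eigenvector `x` of `D`
with eigenvalue `λ` gives `⟨(A - B) x, x⟩ = λ (⟨√A x, x⟩ + ⟨√B x, x⟩)`. If `λ < 0`, the left side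
is `≥ 0` and the right side `≤ 0`, so both quadratic forms of the square roots vanish at `x`;
hence `√A x = √B x = 0`, and `λ x = D x = 0` forces `x = 0`. Thus `λ ≥ 0`.
-/

open ComplexOrder

/-- The positive semidefinite square root of a positive semidefinite matrix
(the definition `Matrix.PosSemidef.sqrt` of the older Mathlib, since removed). -/
noncomputable def Matrix.PosSemidef.sqrt {n : Type*} [Fintype n] [DecidableEq n] {𝕜 : Type*}
    [RCLike 𝕜] {A : Matrix n n 𝕜} (hA : A.PosSemidef) : Matrix n n 𝕜 :=
  hA.1.eigenvectorUnitary.1 * Matrix.diagonal ((↑) ∘ (√·) ∘ hA.1.eigenvalues) *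
    (star hA.1.eigenvectorUnitary : Matrix n n 𝕜)

namespace Matrix

variable {n 𝕜 : Type*} [Fintype n] [RCLike 𝕜]

section Sqrt

variable [DecidableEq n] {A : Matrix n n 𝕜}

theorem PosSemidef.posSemidef_sqrt (hA : A.PosSemidef) : hA.sqrt.PosSemidef := by
  refine .mul_mul_conjTranspose_same (.diagonal fun i ↦ ?_) _
  exact RCLike.ofReal_nonneg.mpr (Real.sqrt_nonneg _)

theorem PosSemidef.sqrt_mul_self (hA : A.PosSemidef) : hA.sqrt * hA.sqrt = A := by
  set U : Matrix n n 𝕜 := ↑hA.1.eigenvectorUnitary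
  set S : Matrix n n 𝕜 := diagonal ((↑) ∘ (√·) ∘ hA.1.eigenvalues)
  have hU : star U * U = 1 := Unitary.coe_star_mul_self _
  have hS : S * S = diagonal (((↑) : ℝ → 𝕜) ∘ hA.1.eigenvalues) := by
    rw [diagonal_mul_diagonal]
    congr 1 with i
    simp [← RCLike.ofReal_mul, Real.mul_self_sqrt (hA.eigenvalues_nonneg i)]
  conv_rhs => rw [hA.1.spectral_theorem, Unitary.conjStarAlgAut_apply]
  calc hA.sqrt * hA.sqrt = U * S * (star U * U) * S * star U := by
        simp only [PosSemidef.sqrt, U, S, Matrix.mul_assoc]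
    _ = _ := by rw [hU, Matrix.mul_one, Matrix.mul_assoc U, hS]

end Sqrt

variable {D P Q : Matrix n n 𝕜} {x : n → 𝕜} {μ : ℝ}

theorem IsHermitian.dotProduct_mul_mulVec_of_mulVec_eq_smul_left (hD : D.IsHermitian)
    (hx : D *ᵥ x = (μ : 𝕜) • x) (M : Matrix n n 𝕜) :
    star x ⬝ᵥ (D * M) *ᵥ x = μ * (star x ⬝ᵥ M *ᵥ x) := by
  rw [← mulVec_mulVec, dotProduct_mulVec, ← hD, ← star_mulVec, hx]
  simp [dotProduct_mulVec, smul_vecMul, smul_dotProduct, RCLike.real_smul_eq_coe_mul]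

theorem dotProduct_mul_mulVec_of_mulVec_eq_smul_right (hx : D *ᵥ x = (μ : 𝕜) • x)
    (M : Matrix n n 𝕜) :
    star x ⬝ᵥ (M * D) *ᵥ x = μ * (star x ⬝ᵥ M *ᵥ x) := by
  rw [← mulVec_mulVec, hx, mulVec_smul, dotProduct_smul, smul_eq_mul]

theorem dotProduct_mul_self_sub_mul_self_mulVec (hPQ : (P - Q).IsHermitian)
    (hx : (P - Q) *ᵥ x = (μ : 𝕜) • x) :
    star x ⬝ᵥ (P * P - Q * Q) *ᵥ x = μ * (star x ⬝ᵥ P *ᵥ x + star x ⬝ᵥ Q *ᵥ x) := by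
  have hfact : P * P - Q * Q = P * (P - Q) + (P - Q) * Q := by noncomm_ring
  rw [hfact, add_mulVec, dotProduct_add, dotProduct_mul_mulVec_of_mulVec_eq_smul_right hx,
    hPQ.dotProduct_mul_mulVec_of_mulVec_eq_smul_left hx, mul_add]

theorem PosSemidef.eigenvalue_sub_nonneg_of_posSemidef_mul_self_sub (hP : P.PosSemidef)
    (hQ : Q.PosSemidef) (hPQ : (P * P - Q * Q).PosSemidef) (hx0 : x ≠ 0)
    (hx : (P - Q) *ᵥ x = (μ : 𝕜) • x) :
    0 ≤ μ := by
  by_contra! hμ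
  obtain ⟨ha, ha'⟩ := RCLike.nonneg_iff.mp (hP.dotProduct_mulVec_nonneg x)
  obtain ⟨hb, hb'⟩ := RCLike.nonneg_iff.mp (hQ.dotProduct_mulVec_nonneg x)
  have hform := (RCLike.nonneg_iff.mp (hPQ.dotProduct_mulVec_nonneg x)).1
  rw [dotProduct_mul_self_sub_mul_self_mulVec (hP.1.sub hQ.1) hx, RCLike.re_ofReal_mul,
    map_add] at hform
  have hPx : P *ᵥ x = 0 := (hP.dotProduct_mulVec_zero_iff x).mp <|
    RCLike.ext (by simp only [map_zero]; nlinarith) (by simpa using ha')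
  have hQx : Q *ᵥ x = 0 := (hQ.dotProduct_mulVec_zero_iff x).mp <|
    RCLike.ext (by simp only [map_zero]; nlinarith) (by simpa using hb')
  rw [sub_mulVec, hPx, hQx, sub_zero, eq_comm, smul_eq_zero] at hx
  exact hx.elim (by exact_mod_cast hμ.ne) hx0

end Matrix

/-- If `A ≥ B ≥ 0` (Loewner order), `x ≠ 0` and `(√A - √B) x = λ x` with `λ < 0`,
then `⟨√A x, x⟩ = 0`, from which `√A x = √B x = 0` and a contradiction follows; in
particular every real eigenvalue `λ` of `√A - √B` satisfies `λ ⟨√A x, x⟩ ≥ 0` for a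
corresponding eigenvector `x`. -/
theorem sqrt_sub_sqrt_eigenvalue_nonneg {n : ℕ} (A B : Matrix (Fin n) (Fin n) ℂ)
    (hA : A.PosSemidef) (hB : B.PosSemidef) (hAB : (A - B).PosSemidef)
    (x : Fin n → ℂ) (hx : x ≠ 0) (lam : ℝ)
    (heig : (hA.sqrt - hB.sqrt).mulVec x = (lam : ℂ) • x) :
    (lam < 0 →
      dotProduct (star x) (hA.sqrt.mulVec x) = 0 ∧
      hA.sqrt.mulVec x = 0 ∧ hB.sqrt.mulVec x = 0 ∧ False) ∧
    0 ≤ lam * (dotProduct (star x) (hA.sqrt.mulVec x)).re := by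
  have hlam : 0 ≤ lam := hA.posSemidef_sqrt.eigenvalue_sub_nonneg_of_posSemidef_mul_self_sub
    hB.posSemidef_sqrt (by rwa [hA.sqrt_mul_self, hB.sqrt_mul_self]) hx heig
  refine ⟨fun hlam' ↦ absurd hlam hlam'.not_ge, mul_nonneg hlam ?_⟩
  exact (RCLike.nonneg_iff.mp (hA.posSemidef_sqrt.dotProduct_mulVec_nonneg x)).1
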